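/- Let p₁ < p₀ and x₁ < x₀ be reals, and let α ∈ (0, π/2) satisfy α·cot(α) = D·(x₀ − x₁)/(p₀ − p₁) for some D > 0. Define g(x) = (p₀+p₁)/2 + ((p₀−p₁)/(2 sin α))·sin(α(x − (x₀+x₁)/2)/((x₀−x₁)/2)) on [x₁, x₀]. Then g(x₁) = p₁, g(x₀) = p₀, g'(x₁) = g'(x₀) = D, ∫_{x₁}^{x₀} g(x) dx = (p₀+p₁)(x₀−x₁)/2, and for all x ∈ [x₁, x₀], D ≤ g'(x) ≤ (π/2)·(p₀−p₁)/(x₀−x₁). -/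

import Mathlib

/-!
The phase `α (x - c) / h`, with `c` the midpoint and `h` the half-length of `[x₁, x₀]`, runs
affinely from `-α` to `α`, so the sine term takes the endpoint values `∓1` after normalisation by
`sin α`, and it is odd about `c`, so it integrates to zero and the integral is that of the constant
mean `(p₀ + p₁) / 2`. The derivative is `m (α / sin α) cos θ` with `m` the slope of the line and
`|θ| ≤ α`; it is smallest at the endpoints, where it equals `m α cot α = D`, and at most
`m α / sin α ≤ m π / 2` by Jordan's inequality `sin α ≥ 2α / π`.
-/

open Real Set

theorem intervalIntegral.integral_eq_zero_of_comp_sub_left_eq_neg {E : Type*}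
    [NormedAddCommGroup E] [NormedSpace ℝ E] {f : ℝ → E} {a b : ℝ}
    (hf : ∀ x, f (a + b - x) = -f x) : ∫ x in a..b, f x = 0 := by
  have hrefl := intervalIntegral.integral_comp_sub_left f (a + b) (a := a) (b := b)
  simp only [hf, intervalIntegral.integral_neg, add_sub_cancel_right, add_sub_cancel_left]
    at hrefl
  have htwo : (2 : ℝ) • ∫ x in a..b, f x = 0 := by
    rw [two_smul]
    nth_rewrite 1 [← hrefl]
    exact neg_add_cancel _
  exact (smul_eq_zero.1 htwo).resolve_left two_ne_zero

theorem Real.cos_le_cos_of_abs_le {θ α : ℝ} (hθ : |θ| ≤ α) (hα : α ≤ π) : cos α ≤ cos θ := by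
  rw [← cos_abs θ]
  exact cos_le_cos_of_nonneg_of_le_pi (abs_nonneg θ) hα hθ

theorem Real.div_sin_le_pi_div_two {α : ℝ} (h₀ : 0 < α) (hπ : α ≤ π / 2) :
    α / sin α ≤ π / 2 := by
  have hsin : 2 / π * α ≤ sin α := mul_le_sin h₀.le hπ
  rw [div_le_iff₀ (lt_of_lt_of_le (by positivity) hsin)]
  calc α = π / 2 * (2 / π * α) := by field_simp
    _ ≤ π / 2 * sin α := by gcongr

noncomputable def bridgePhase (x₁ x₀ α x : ℝ) : ℝ :=
  α * (x - (x₀ + x₁) / 2) / ((x₀ - x₁) / 2)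

noncomputable def sinusoidalBridge (p₁ p₀ x₁ x₀ α x : ℝ) : ℝ :=
  (p₀ + p₁) / 2 + (p₀ - p₁) / (2 * sin α) * sin (bridgePhase x₁ x₀ α x)

section Phase

variable {x₁ x₀ : ℝ} (α : ℝ)

theorem bridgePhase_left (h : x₁ ≠ x₀) : bridgePhase x₁ x₀ α x₁ = -α := by
  have : x₀ - x₁ ≠ 0 := sub_ne_zero.2 h.symm
  unfold bridgePhase
  field_simp
  ring

theorem bridgePhase_right (h : x₁ ≠ x₀) : bridgePhase x₁ x₀ α x₀ = α := by
  have : x₀ - x₁ ≠ 0 := sub_ne_zero.2 h.symm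
  unfold bridgePhase
  field_simp
  ring

theorem bridgePhase_sub_left (x : ℝ) :
    bridgePhase x₁ x₀ α (x₁ + x₀ - x) = -bridgePhase x₁ x₀ α x := by
  unfold bridgePhase
  ring

theorem hasDerivAt_bridgePhase (x : ℝ) :
    HasDerivAt (bridgePhase x₁ x₀ α) (α / ((x₀ - x₁) / 2)) x := by
  have h := (((hasDerivAt_id x).sub_const ((x₀ + x₁) / 2)).const_mul α).div_const
    ((x₀ - x₁) / 2)
  simp only [id_eq, mul_one] at h
  exact h

end Phase

theorem abs_bridgePhase_le {x₁ x₀ α x : ℝ} (hα : 0 ≤ α) (hx : x ∈ Icc x₁ x₀) :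
    |bridgePhase x₁ x₀ α x| ≤ α := by
  have hdist : |x - (x₀ + x₁) / 2| ≤ |(x₀ - x₁) / 2| := by
    rw [abs_of_nonneg (a := (x₀ - x₁) / 2) (by linarith [hx.1.trans hx.2]), abs_le]
    constructor <;> linarith [hx.1, hx.2]
  rw [bridgePhase, abs_div, abs_mul, abs_of_nonneg hα]
  exact div_le_of_le_mul₀ (abs_nonneg _) hα (by gcongr)

section Bridge

variable {p₁ p₀ x₁ x₀ α : ℝ}

theorem sinusoidalBridge_left (hx : x₁ ≠ x₀) (hα : sin α ≠ 0) :
    sinusoidalBridge p₁ p₀ x₁ x₀ α x₁ = p₁ := by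
  rw [sinusoidalBridge, bridgePhase_left α hx, sin_neg]
  field_simp
  ring

theorem sinusoidalBridge_right (hx : x₁ ≠ x₀) (hα : sin α ≠ 0) :
    sinusoidalBridge p₁ p₀ x₁ x₀ α x₀ = p₀ := by
  rw [sinusoidalBridge, bridgePhase_right α hx]
  field_simp
  ring

theorem hasDerivAt_sinusoidalBridge (x : ℝ) :
    HasDerivAt (sinusoidalBridge p₁ p₀ x₁ x₀ α)
      ((p₀ - p₁) / (x₀ - x₁) * (α / sin α) * cos (bridgePhase x₁ x₀ α x)) x := by
  have h := ((hasDerivAt_bridgePhase (x₁ := x₁) (x₀ := x₀) α x).sin.const_mul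
    ((p₀ - p₁) / (2 * sin α))).const_add ((p₀ + p₁) / 2)
  exact h.congr_deriv (by rw [div_div_eq_mul_div]; ring)

theorem integral_sinusoidalBridge :
    ∫ x in x₁..x₀, sinusoidalBridge p₁ p₀ x₁ x₀ α x = (p₀ + p₁) * (x₀ - x₁) / 2 := by
  have hodd : ∫ x in x₁..x₀, sin (bridgePhase x₁ x₀ α x) = 0 :=
    intervalIntegral.integral_eq_zero_of_comp_sub_left_eq_neg fun x => by
      rw [bridgePhase_sub_left, sin_neg]
  have hcont : Continuous fun x => sin (bridgePhase x₁ x₀ α x) :=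
    continuous_sin.comp <| continuous_iff_continuousAt.2 fun x =>
      (hasDerivAt_bridgePhase α x).continuousAt
  simp only [sinusoidalBridge]
  rw [intervalIntegral.integral_add intervalIntegrable_const
      ((hcont.intervalIntegrable _ _).const_mul _),
    intervalIntegral.integral_const_mul, hodd, intervalIntegral.integral_const, smul_eq_mul]
  ring

end Bridge

theorem stmt_7_general (p₁ p₀ x₁ x₀ α D : ℝ) (g : ℝ → ℝ)
    (hp : p₁ < p₀) (hx : x₁ < x₀) (hα1 : 0 < α) (hα2 : α < Real.pi / 2)
    (hαD : α * (Real.cos α / Real.sin α) = D * (x₀ - x₁) / (p₀ - p₁))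
    (hg : ∀ x, g x = (p₀ + p₁) / 2 +
      (p₀ - p₁) / (2 * Real.sin α) * Real.sin (α * (x - (x₀ + x₁) / 2) / ((x₀ - x₁) / 2))) :
    g x₁ = p₁ ∧ g x₀ = p₀ ∧ deriv g x₁ = D ∧ deriv g x₀ = D ∧
    (∫ x in x₁..x₀, g x) = (p₀ + p₁) * (x₀ - x₁) / 2 ∧
    ∀ x ∈ Set.Icc x₁ x₀,
      D ≤ deriv g x ∧ deriv g x ≤ (Real.pi / 2) * (p₀ - p₁) / (x₀ - x₁) := by
  obtain rfl : g = sinusoidalBridge p₁ p₀ x₁ x₀ α := funext hg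
  have hsin : 0 < sin α := sin_pos_of_pos_of_lt_pi hα1 (by linarith [pi_pos])
  have hslope : 0 < (p₀ - p₁) / (x₀ - x₁) := div_pos (sub_pos.2 hp) (sub_pos.2 hx)
  have hderiv (x : ℝ) : deriv (sinusoidalBridge p₁ p₀ x₁ x₀ α) x =
      (p₀ - p₁) / (x₀ - x₁) * (α / sin α) * cos (bridgePhase x₁ x₀ α x) :=
    (hasDerivAt_sinusoidalBridge x).deriv
  have hD : (p₀ - p₁) / (x₀ - x₁) * (α / sin α) * cos α = D := by
    field_simp [(sub_pos.2 hp).ne', (sub_pos.2 hx).ne'] at hαD ⊢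
    linear_combination hαD
  refine ⟨sinusoidalBridge_left hx.ne hsin.ne', sinusoidalBridge_right hx.ne hsin.ne',
    by rw [hderiv, bridgePhase_left α hx.ne, cos_neg, hD],
    by rw [hderiv, bridgePhase_right α hx.ne, hD], integral_sinusoidalBridge,
    fun x hxI => ⟨?_, ?_⟩⟩
  · rw [hderiv, ← hD]
    gcongr
    exact cos_le_cos_of_abs_le (abs_bridgePhase_le hα1.le hxI) (by linarith [pi_pos])
  · calc deriv (sinusoidalBridge p₁ p₀ x₁ x₀ α) x
        ≤ (p₀ - p₁) / (x₀ - x₁) * (α / sin α) * 1 := by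
          rw [hderiv]
          gcongr
          exact cos_le_one _
      _ ≤ (p₀ - p₁) / (x₀ - x₁) * (π / 2) := by
          rw [mul_one]
          exact mul_le_mul_of_nonneg_left (div_sin_le_pi_div_two hα1 hα2.le) hslope.le
      _ = π / 2 * (p₀ - p₁) / (x₀ - x₁) := by ring

/-- Properties of the sinusoidal replacement of a linear segment. -/
theorem stmt_7 (p₁ p₀ x₁ x₀ α D : ℝ) (g : ℝ → ℝ)
    (hp : p₁ < p₀) (hx : x₁ < x₀) (hα1 : 0 < α) (hα2 : α < Real.pi / 2) (hD : 0 < D)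
    (hαD : α * (Real.cos α / Real.sin α) = D * (x₀ - x₁) / (p₀ - p₁))
    (hg : ∀ x, g x = (p₀ + p₁) / 2 +
      (p₀ - p₁) / (2 * Real.sin α) * Real.sin (α * (x - (x₀ + x₁) / 2) / ((x₀ - x₁) / 2))) :
    g x₁ = p₁ ∧ g x₀ = p₀ ∧ deriv g x₁ = D ∧ deriv g x₀ = D ∧
    (∫ x in x₁..x₀, g x) = (p₀ + p₁) * (x₀ - x₁) / 2 ∧
    ∀ x ∈ Set.Icc x₁ x₀,
      D ≤ deriv g x ∧ deriv g x ≤ (Real.pi / 2) * (p₀ - p₁) / (x₀ - x₁) :=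
  stmt_7_general p₁ p₀ x₁ x₀ α D g hp hx hα1 hα2 hαD hg
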